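/- arXiv:math/9910031 — 2 statements merged into one kernel-verified Lean document; each statement's English description precedes it below -/
import Mathlib

section
/- Let 0 < q < 1. The element 1 − x x* is neither a left nor a right zero divisor in P(D_q): for every a ∈ P(D_q), if (1 − x x*)·a = 0 or a·(1 − x x*) = 0 then a = 0. -/
noncomputable section

/-- The free algebra ℂ⟨x, x*⟩ on two generators (generator 0 is `x`, generator 1 is `x*`). -/
abbrev FreeDisc : Type := FreeAlgebra ℂ (Fin 2)

/-- The defining relation of the quantum disc: x* x = q x x* + (1 - q)·1. -/
def discRel (q : ℝ) : FreeDisc → FreeDisc → Prop := fun a b =>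
  a = FreeAlgebra.ι ℂ (1 : Fin 2) * FreeAlgebra.ι ℂ (0 : Fin 2) ∧
  b = (q : ℂ) • (FreeAlgebra.ι ℂ (0 : Fin 2) * FreeAlgebra.ι ℂ (1 : Fin 2)) +
      ((1 : ℂ) - (q : ℂ)) • 1

/-- The polynomial quantum disc algebra P(D_q). -/
abbrev QDisc (q : ℝ) : Type := RingQuot (discRel q)

/-- The generator x of P(D_q). -/
def xq (q : ℝ) : QDisc q := RingQuot.mkAlgHom ℂ (discRel q) (FreeAlgebra.ι ℂ 0)

/-- The generator x* of P(D_q). -/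
def xsq (q : ℝ) : QDisc q := RingQuot.mkAlgHom ℂ (discRel q) (FreeAlgebra.ι ℂ 1)

/-!
P(D_q) acts on the space with basis `e i j` (i, j ∈ ℕ) by transporting left multiplication
along `e i j ↦ x^i x*^j`; the action is faithful because `a` is recovered as the image of
`a • e 0 0`. In this representation `x` shifts `i`, and `1 - x x*` acts as
`e i j ↦ q^i (e i j - e (i+1) (j+1))`, the composite of an invertible diagonal operator
(as `q ≠ 0`) with `1 - S` for a shift `S` without finite orbits; hence it is injective and
`1 - x x*` is left regular. The antiautomorphism exchanging `x` and `x*` fixes `1 - x x*`,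
which turns left regularity into right regularity.
-/

open Function MulOpposite

theorem IsLeftRegular.of_map {F M N : Type*} [Mul M] [Mul N] [FunLike F M N] [MulHomClass F M N]
    (f : F) (hf : Injective f) {a : M} (h : IsLeftRegular (f a)) : IsLeftRegular a :=
  fun b c hbc => hf (h (by simpa only [map_mul] using congrArg f hbc))

theorem IsRightRegular.of_map {F M N : Type*} [Mul M] [Mul N] [FunLike F M N] [MulHomClass F M N]
    (f : F) (hf : Injective f) {a : M} (h : IsRightRegular (f a)) : IsRightRegular a :=
  fun b c hbc => hf (h (by simpa only [map_mul] using congrArg f hbc))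

theorem Module.End.isLeftRegular_of_injective {R M : Type*} [Semiring R] [AddCommMonoid M]
    [Module R M] {f : Module.End R M} (hf : Function.Injective f) : IsLeftRegular f :=
  fun _ _ hgh => LinearMap.ext fun v => hf (LinearMap.congr_fun hgh v)

theorem AlgHom.injective_of_comp_eq_mulLeft_comp {R A M : Type*} [CommSemiring R] [Semiring A]
    [Algebra R A] [AddCommMonoid M] [Module R M] (ρ : A →ₐ[R] Module.End R M) (Ψ : M →ₗ[R] A)
    (hΨ : ∀ a, Ψ ∘ₗ ρ a = LinearMap.mulLeft R a ∘ₗ Ψ) {m : M} (hm : Ψ m = 1) :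
    Injective ρ := by
  have hρ (a : A) : Ψ (ρ a m) = a := by
    simpa [hm] using LinearMap.congr_fun (hΨ a) m
  intro a b hab
  rw [← hρ a, ← hρ b, hab]

namespace Finsupp

theorem eq_zero_of_mapDomain_eq_self {α M : Type*} [AddCommMonoid M] {f : α → α} (μ : α → ℕ)
    (hμ : ∀ a, μ a < μ (f a)) {v : α →₀ M} (hv : mapDomain f v = v) : v = 0 := by
  classical
  by_contra hne
  obtain ⟨a, ha, hmin⟩ := v.support.exists_min_image μ (support_nonempty_iff.mpr hne)
  rw [← hv] at ha
  obtain ⟨b, hb, rfl⟩ := Finset.mem_image.mp (mapDomain_support ha)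
  exact (hmin b hb).not_gt (hμ b)

theorem linearCombination_smul_single_one_apply {α R : Type*} [CommSemiring R] (w : α → R)
    (v : α →₀ R) (a : α) :
    linearCombination R (fun b => w b • single b (1 : R)) v a = w a * v a := by
  classical
  induction v using induction_linear with
  | zero => simp
  | add v v' hv hv' => simp only [map_add, coe_add, Pi.add_apply, hv, hv', mul_add]
  | single b c => by_cases h : b = a <;> simp [h, mul_comm]

theorem linearCombination_smul_single_one_injective {α R : Type*} [CommRing R] [NoZeroDivisors R]
    {w : α → R} (hw : ∀ a, w a ≠ 0) :
    Injective (linearCombination R fun a => w a • single a (1 : R)) := by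
  refine (injective_iff_map_eq_zero _).mpr fun v hv => ext fun a => ?_
  have := linearCombination_smul_single_one_apply w v a
  rw [hv, coe_zero, Pi.zero_apply, eq_comm, mul_eq_zero] at this
  exact this.resolve_left (hw a)

end Finsupp

namespace QDisc

variable {q : ℝ}

theorem xsq_mul_xq : xsq q * xq q = (q : ℂ) • (xq q * xsq q) + (1 - (q : ℂ)) • 1 := by
  simpa only [map_add, map_mul, map_smul, map_one, xq, xsq] using
    RingQuot.mkAlgHom_rel ℂ (s := discRel q) ⟨rfl, rfl⟩

theorem induction {motive : QDisc q → Prop} (algebraMap : ∀ r : ℂ, motive (algebraMap ℂ _ r))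
    (x : motive (xq q)) (xstar : motive (xsq q))
    (add : ∀ a b, motive a → motive b → motive (a + b))
    (mul : ∀ a b, motive a → motive b → motive (a * b)) (a : QDisc q) : motive a := by
  obtain ⟨a, rfl⟩ := RingQuot.mkAlgHom_surjective ℂ (discRel q) a
  induction a using FreeAlgebra.induction with
  | grade0 r => simpa only [AlgHom.commutes] using algebraMap r
  | grade1 i => fin_cases i; exacts [x, xstar]
  | mul a b ha hb => simpa only [map_mul] using mul _ _ ha hb
  | add a b ha hb => simpa only [map_add] using add _ _ ha hb

theorem algHom_ext {A : Type*} [Semiring A] [Algebra ℂ A] {f g : QDisc q →ₐ[ℂ] A}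
    (hx : f (xq q) = g (xq q)) (hxs : f (xsq q) = g (xsq q)) : f = g :=
  AlgHom.ext <| induction (by simp) hx hxs (by intros; simp [*]) (by intros; simp [*])

variable (q) in
def lift {A : Type*} [Semiring A] [Algebra ℂ A] (a b : A)
    (h : b * a = (q : ℂ) • (a * b) + (1 - (q : ℂ)) • 1) : QDisc q →ₐ[ℂ] A :=
  RingQuot.liftAlgHom ℂ ⟨FreeAlgebra.lift ℂ ![a, b], by
    rintro _ _ ⟨rfl, rfl⟩
    simpa only [map_add, map_mul, map_smul, map_one, FreeAlgebra.lift_ι_apply, Matrix.cons_val_zero,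
      Matrix.cons_val_one, Matrix.head_cons] using h⟩

section lift

variable {A : Type*} [Semiring A] [Algebra ℂ A] {a b : A}
  {h : b * a = (q : ℂ) • (a * b) + (1 - (q : ℂ)) • 1}

@[simp] theorem lift_xq : lift q a b h (xq q) = a := by
  simp [lift, xq]

@[simp] theorem lift_xsq : lift q a b h (xsq q) = b := by
  simp [lift, xsq]

end lift

open Finsupp

def repX : Module.End ℂ ((ℕ × ℕ) →₀ ℂ) := lmapDomain ℂ ℂ fun p => (p.1 + 1, p.2)

-- For `i = 0` the junk index `0 - 1 = 0` comes with the coefficient `1 - q ^ 0 = 0`.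
def repXstar (q : ℝ) : Module.End ℂ ((ℕ × ℕ) →₀ ℂ) :=
  linearCombination ℂ fun p =>
    (q : ℂ) ^ p.1 • single (p.1, p.2 + 1) 1 + (1 - (q : ℂ) ^ p.1) • single (p.1 - 1, p.2) 1

def repShift : Module.End ℂ ((ℕ × ℕ) →₀ ℂ) := lmapDomain ℂ ℂ fun p => (p.1 + 1, p.2 + 1)

def repScale (q : ℝ) : Module.End ℂ ((ℕ × ℕ) →₀ ℂ) :=
  linearCombination ℂ fun p => (q : ℂ) ^ p.1 • single p 1

@[simp] theorem repX_single (i j : ℕ) : repX (single (i, j) 1) = single (i + 1, j) 1 := by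
  simp [repX]

@[simp] theorem repXstar_single (q : ℝ) (i j : ℕ) :
    repXstar q (single (i, j) 1) =
      (q : ℂ) ^ i • single (i, j + 1) 1 + (1 - (q : ℂ) ^ i) • single (i - 1, j) 1 := by
  simp only [repXstar, linearCombination_single, one_smul]

@[simp] theorem repShift_single (i j : ℕ) :
    repShift (single (i, j) 1) = single (i + 1, j + 1) 1 := by
  simp [repShift]

@[simp] theorem repScale_single (q : ℝ) (i j : ℕ) :
    repScale q (single (i, j) 1) = (q : ℂ) ^ i • single (i, j) 1 := by
  simp only [repScale, linearCombination_single, one_smul]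

theorem repXstar_mul_repX (q : ℝ) :
    repXstar q * repX = (q : ℂ) • (repX * repXstar q) + (1 - (q : ℂ)) • 1 := by
  ext ⟨i, j⟩ : 2
  rcases i with _ | i
  · simp
  · simp only [LinearMap.comp_apply, lsingle_apply, LinearMap.add_apply, LinearMap.smul_apply,
      Module.End.mul_apply, Module.End.one_apply, repX_single, repXstar_single, map_add, map_smul,
      Nat.add_sub_cancel]
    module

theorem one_sub_repX_mul_repXstar (q : ℝ) :
    1 - repX * repXstar q = (1 - repShift) * repScale q := by
  ext ⟨i, j⟩ : 2
  rcases i with _ | i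
  · simp
  · simp only [LinearMap.comp_apply, lsingle_apply, LinearMap.sub_apply, Module.End.mul_apply,
      Module.End.one_apply, repX_single, repXstar_single, repShift_single, repScale_single,
      map_add, map_smul, Nat.add_sub_cancel]
    module

theorem injective_one_sub_repShift :
    Function.Injective (1 - repShift : Module.End ℂ ((ℕ × ℕ) →₀ ℂ)) := by
  refine (injective_iff_map_eq_zero _).mpr fun v hv => ?_
  rw [LinearMap.sub_apply, Module.End.one_apply, sub_eq_zero, eq_comm] at hv
  exact eq_zero_of_mapDomain_eq_self Prod.fst (fun _ => Nat.lt_succ_self _) hv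

theorem injective_repScale (hq : q ≠ 0) : Function.Injective (repScale q) :=
  linearCombination_smul_single_one_injective fun _ => pow_ne_zero _ (by exact_mod_cast hq)

theorem xsq_mul_xq_pow (i : ℕ) :
    xsq q * xq q ^ i = (q : ℂ) ^ i • (xq q ^ i * xsq q) + (1 - (q : ℂ) ^ i) • xq q ^ (i - 1) := by
  induction i with
  | zero => simp
  | succ i ih =>
    have hpow : (1 - (q : ℂ) ^ i) • xq q ^ (i - 1) * xq q = (1 - (q : ℂ) ^ i) • xq q ^ i := by
      rcases i with _ | i <;> simp [pow_succ]
    calc xsq q * xq q ^ (i + 1)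
        = (q : ℂ) ^ i • (xq q ^ i * (xsq q * xq q)) + (1 - (q : ℂ) ^ i) • xq q ^ i := by
          rw [pow_succ, ← mul_assoc, ih, add_mul, smul_mul_assoc, mul_assoc, hpow]
      _ = _ := by
          rw [xsq_mul_xq]
          simp only [mul_add, mul_smul_comm, mul_one, pow_succ, mul_assoc, Nat.add_sub_cancel]
          module

variable (q) in
def monomialMap : ((ℕ × ℕ) →₀ ℂ) →ₗ[ℂ] QDisc q :=
  linearCombination ℂ fun p => xq q ^ p.1 * xsq q ^ p.2

@[simp] theorem monomialMap_single (i j : ℕ) :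
    monomialMap q (single (i, j) 1) = xq q ^ i * xsq q ^ j := by
  simp [monomialMap]

theorem monomialMap_comp_repX :
    monomialMap q ∘ₗ repX = LinearMap.mulLeft ℂ (xq q) ∘ₗ monomialMap q := by
  ext ⟨i, j⟩ : 2
  simp [pow_succ', mul_assoc]

theorem monomialMap_comp_repXstar :
    monomialMap q ∘ₗ repXstar q = LinearMap.mulLeft ℂ (xsq q) ∘ₗ monomialMap q := by
  ext ⟨i, j⟩ : 2
  simp only [LinearMap.comp_apply, lsingle_apply, repXstar_single, map_add, map_smul,
    monomialMap_single, LinearMap.mulLeft_apply, ← mul_assoc, xsq_mul_xq_pow, add_mul,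
    smul_mul_assoc]
  rw [pow_succ', ← mul_assoc]

variable (q) in
def rep : QDisc q →ₐ[ℂ] Module.End ℂ ((ℕ × ℕ) →₀ ℂ) :=
  lift q repX (repXstar q) (repXstar_mul_repX q)

theorem monomialMap_comp_rep (a : QDisc q) :
    monomialMap q ∘ₗ rep q a = LinearMap.mulLeft ℂ a ∘ₗ monomialMap q := by
  induction a using QDisc.induction with
  | algebraMap r => exact LinearMap.ext fun v => by simp [Algebra.algebraMap_eq_smul_one]
  | x => simpa [rep] using monomialMap_comp_repX
  | xstar => simpa [rep] using monomialMap_comp_repXstar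
  | add a b ha hb =>
    rw [map_add, LinearMap.comp_add, ha, hb]
    exact LinearMap.ext fun v => add_mul a b _ |>.symm
  | mul a b ha hb =>
    rw [map_mul, Module.End.mul_eq_comp, ← LinearMap.comp_assoc, ha, LinearMap.comp_assoc, hb,
      LinearMap.mulLeft_mul, LinearMap.comp_assoc]

theorem rep_injective : Function.Injective (rep q) :=
  (rep q).injective_of_comp_eq_mulLeft_comp (monomialMap q) monomialMap_comp_rep
    (m := single (0, 0) 1) (by simp)

theorem isLeftRegular_one_sub_xq_mul_xsq (hq : q ≠ 0) : IsLeftRegular (1 - xq q * xsq q) := by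
  refine IsLeftRegular.of_map (rep q) rep_injective ?_
  rw [map_sub, map_one, map_mul]
  simp only [rep, lift_xq, lift_xsq, one_sub_repX_mul_repXstar]
  exact Module.End.isLeftRegular_of_injective
    (injective_one_sub_repShift.comp (injective_repScale hq))

variable (q) in
def opSwap : QDisc q →ₐ[ℂ] (QDisc q)ᵐᵒᵖ :=
  lift q (op (xsq q)) (op (xq q)) <| by
    simpa only [op_mul, op_add, op_smul, op_one] using congrArg op (xsq_mul_xq (q := q))

theorem opSwap_injective : Function.Injective (opSwap q) := by
  have : (AlgHom.opComm (opSwap q)).comp (opSwap q) = AlgHom.id ℂ _ :=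
    algHom_ext (by simp [opSwap]) (by simp [opSwap])
  exact LeftInverse.injective (g := AlgHom.opComm (opSwap q)) (AlgHom.congr_fun this)

theorem isRegular_one_sub_xq_mul_xsq (hq : q ≠ 0) : IsRegular (1 - xq q * xsq q) := by
  refine ⟨isLeftRegular_one_sub_xq_mul_xsq hq,
    IsRightRegular.of_map (opSwap q) opSwap_injective ?_⟩
  rw [map_sub, map_one, map_mul]
  simp only [opSwap, lift_xq, lift_xsq, ← op_mul, ← op_one, ← op_sub, isRightRegular_op]
  exact isLeftRegular_one_sub_xq_mul_xsq hq

end QDisc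

theorem one_sub_xxstar_not_zero_divisor_general (q : ℝ) (hq0 : 0 < q) :
    ∀ a : QDisc q,
      ((1 - xq q * xsq q) * a = 0 ∨ a * (1 - xq q * xsq q) = 0) → a = 0 := by
  have hreg := QDisc.isRegular_one_sub_xq_mul_xsq hq0.ne'
  rintro a (h | h)
  · exact hreg.left.mul_left_eq_zero_iff.mp h
  · exact hreg.right.mul_right_eq_zero_iff.mp h

/-- For 0 < q < 1, the element 1 - x x* is neither a left nor a right zero
divisor in P(D_q). -/
theorem one_sub_xxstar_not_zero_divisor (q : ℝ) (hq0 : 0 < q) (hq1 : q < 1) :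
    ∀ a : QDisc q,
      ((1 - xq q * xsq q) * a = 0 ∨ a * (1 - xq q * xsq q) = 0) → a = 0 :=
  one_sub_xxstar_not_zero_divisor_general q hq0
end
end

section
/- Let 0 < p, q < 1, let H be a complex Hilbert space, and let ρ : P(S²_{pqφ}) → B(H) be a unital star-algebra homomorphism into the bounded operators on H. Then the closed subspaces ker(1 − ρ(f₀)) and ker(ρ(f₁f₋₁ − f₀)) are invariant under ρ(a) for every a ∈ P(S²_{pqφ}), and the orthogonal complement of ker(1 − ρ(f₀)) in H is contained in ker(ρ(f₁f₋₁ − f₀)); consequently H is the orthogonal direct sum of ker(1 − ρ(f₀)) and ker(ρ(f₁f₋₁ − f₀)) ∩ (ker(1 − ρ(f₀)))^⊥. -/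
noncomputable section

/-- The free algebra ℂ⟨f₁, f₋₁, f₀⟩ (generator 0 is f₁, generator 1 is f₋₁,
generator 2 is f₀). -/
abbrev FreeSphere : Type := FreeAlgebra ℂ (Fin 3)

/-- f₁ in the free algebra. -/
def F1 : FreeSphere := FreeAlgebra.ι ℂ 0
/-- f₋₁ in the free algebra. -/
def Fm1 : FreeSphere := FreeAlgebra.ι ℂ 1
/-- f₀ in the free algebra. -/
def F0 : FreeSphere := FreeAlgebra.ι ℂ 2

/-- The defining relations of P(S²_{pqφ}). -/
inductive sphereRel (p q : ℝ) : FreeSphere → FreeSphere → Prop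
  | rel1 : sphereRel p q (Fm1 * F1)
      ((q : ℂ) • (F1 * Fm1) + ((p : ℂ) - (q : ℂ)) • F0 + ((1 : ℂ) - (p : ℂ)) • 1)
  | rel2 : sphereRel p q (F0 * F1) ((p : ℂ) • (F1 * F0) + ((1 : ℂ) - (p : ℂ)) • F1)
  | rel3 : sphereRel p q (Fm1 * F0) ((p : ℂ) • (F0 * Fm1) + ((1 : ℂ) - (p : ℂ)) • Fm1)
  | rel4 : sphereRel p q ((1 - F0) * (F1 * Fm1 - F0)) 0

/-- The polynomial algebra P(S²_{pqφ}). -/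
abbrev QSphere (p q : ℝ) : Type := RingQuot (sphereRel p q)

/-- The generator f₁ of P(S²_{pqφ}). -/
def f1 (p q : ℝ) : QSphere p q := RingQuot.mkAlgHom ℂ (sphereRel p q) F1
/-- The generator f₋₁ of P(S²_{pqφ}). -/
def fm1 (p q : ℝ) : QSphere p q := RingQuot.mkAlgHom ℂ (sphereRel p q) Fm1
/-- The generator f₀ of P(S²_{pqφ}). -/
def f0 (p q : ℝ) : QSphere p q := RingQuot.mkAlgHom ℂ (sphereRel p q) F0

open scoped InnerProductSpace

/-! In `P(S²_{pqφ})` the elements `E = 1 - f₀` and `B = f₁f₋₁ - f₀` skew-commute with the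
generators: `E f₁ = p f₁ E`, `f₋₁ E = p E f₋₁`, `B f₁ = q f₁ B`, `f₋₁ B = q B f₋₁`, and both
commute with `f₀`. As `p, q ≠ 0`, the kernels of `ρ E` and `ρ B` are invariant under the
generators, hence under the whole representation. The relation `E B = 0` says
`ran ρ B ⊆ ker ρ E`, and `ρ B` is self-adjoint, so `(ker ρ E)ᗮ ⊆ (ran ρ B)ᗮ = ker ρ B`;
the decomposition `H = ker ρ E ⊕ (ker ρ E)ᗮ` gives the rest. -/

namespace ContinuousLinearMap

variable {R A M : Type*} [CommRing R] [Ring A] [Algebra R A] [TopologicalSpace M]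
  [AddCommGroup M] [Module R M] [IsTopologicalAddGroup M] [ContinuousConstSMul R M]
  (ρ : A →ₐ[R] M →L[R] M)

theorem ker_mem_invtSubmodule_of_mul_eq_smul_mul {x a : A} {c : R} (h : x * a = c • (a * x)) :
    LinearMap.ker (ρ x : M →ₗ[R] M) ∈ Module.End.invtSubmodule (ρ a) := by
  intro ψ (hψ : ρ x ψ = 0)
  simpa [hψ] using congr(ρ $h ψ)

theorem ker_mem_invtSubmodule_of_smul_mul_eq_mul [IsDomain R] [Module.IsTorsionFree R M]
    {x a : A} {c : R} (hc : c ≠ 0) (h : c • (x * a) = a * x) :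
    LinearMap.ker (ρ x : M →ₗ[R] M) ∈ Module.End.invtSubmodule (ρ a) := by
  intro ψ (hψ : ρ x ψ = 0)
  simpa [hψ, hc] using congr(ρ $h ψ)

theorem ker_mem_invtSubmodule_of_commute {x a : A} (h : Commute x a) :
    LinearMap.ker (ρ x : M →ₗ[R] M) ∈ Module.End.invtSubmodule (ρ a) :=
  ker_mem_invtSubmodule_of_mul_eq_smul_mul ρ (c := 1) (by rw [one_smul]; exact h.eq)

theorem mem_invtSubmodule_of_adjoin_eq_top {s : Set A} (hs : Algebra.adjoin R s = ⊤)
    {K : Submodule R M} (hK : ∀ g ∈ s, K ∈ Module.End.invtSubmodule (ρ g)) (a : A) :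
    K ∈ Module.End.invtSubmodule (ρ a) := by
  have ha : a ∈ Algebra.adjoin R s := hs ▸ Algebra.mem_top
  induction ha using Algebra.adjoin_induction with
  | mem g hg => exact hK g hg
  | algebraMap r =>
    intro ψ hψ
    simpa [Algebra.algebraMap_eq_smul_one] using K.smul_mem r hψ
  | add a b _ _ ha hb =>
    intro ψ hψ
    simpa using K.add_mem (ha hψ) (hb hψ)
  | mul a b _ _ ha hb =>
    intro ψ hψ
    simpa using ha (hb hψ)

end ContinuousLinearMap

theorem IsSelfAdjoint.orthogonal_le_ker_of_range_le {𝕜 E : Type*} [RCLike 𝕜]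
    [NormedAddCommGroup E] [InnerProductSpace 𝕜 E] [CompleteSpace E] {T : E →L[𝕜] E}
    (hT : IsSelfAdjoint T) {K : Submodule 𝕜 E} (h : LinearMap.range (T : E →ₗ[𝕜] E) ≤ K) :
    Kᗮ ≤ LinearMap.ker (T : E →ₗ[𝕜] E) := by
  have := Submodule.orthogonal_le h
  rwa [T.orthogonal_range, hT.adjoint_eq] at this

namespace QSphere

variable (p q : ℝ)

theorem fm1_mul_f1 : fm1 p q * f1 p q =
    (q : ℂ) • (f1 p q * fm1 p q) + ((p : ℂ) - q) • f0 p q + (1 - (p : ℂ)) • 1 := by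
  simpa only [f0, f1, fm1, map_mul, map_add, map_smul, map_one] using
    RingQuot.mkAlgHom_rel ℂ (sphereRel.rel1 (p := p) (q := q))

theorem f0_mul_f1 :
    f0 p q * f1 p q = (p : ℂ) • (f1 p q * f0 p q) + (1 - (p : ℂ)) • f1 p q := by
  simpa only [f0, f1, map_mul, map_add, map_smul] using
    RingQuot.mkAlgHom_rel ℂ (sphereRel.rel2 (p := p) (q := q))

theorem fm1_mul_f0 :
    fm1 p q * f0 p q = (p : ℂ) • (f0 p q * fm1 p q) + (1 - (p : ℂ)) • fm1 p q := by
  simpa only [f0, fm1, map_mul, map_add, map_smul] using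
    RingQuot.mkAlgHom_rel ℂ (sphereRel.rel3 (p := p) (q := q))

theorem one_sub_f0_mul_f1_mul_fm1_sub_f0 :
    (1 - f0 p q) * (f1 p q * fm1 p q - f0 p q) = 0 := by
  simpa only [f0, f1, fm1, map_mul, map_sub, map_one, map_zero] using
    RingQuot.mkAlgHom_rel ℂ (sphereRel.rel4 (p := p) (q := q))

theorem one_sub_f0_mul_f1 : (1 - f0 p q) * f1 p q = (p : ℂ) • (f1 p q * (1 - f0 p q)) := by
  rw [sub_mul, one_mul, f0_mul_f1, mul_sub, mul_one]
  module

theorem smul_one_sub_f0_mul_fm1 :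
    (p : ℂ) • ((1 - f0 p q) * fm1 p q) = fm1 p q * (1 - f0 p q) := by
  rw [mul_sub, mul_one, fm1_mul_f0, sub_mul, one_mul]
  module

theorem f1_mul_fm1_sub_f0_mul_f1 :
    (f1 p q * fm1 p q - f0 p q) * f1 p q =
      (q : ℂ) • (f1 p q * (f1 p q * fm1 p q - f0 p q)) := by
  rw [sub_mul, mul_assoc, fm1_mul_f1, f0_mul_f1]
  simp only [mul_add, mul_sub, mul_smul_comm, mul_one]
  module

theorem smul_f1_mul_fm1_sub_f0_mul_fm1 :
    (q : ℂ) • ((f1 p q * fm1 p q - f0 p q) * fm1 p q) =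
      fm1 p q * (f1 p q * fm1 p q - f0 p q) := by
  rw [mul_sub, ← mul_assoc, fm1_mul_f1, fm1_mul_f0]
  simp only [add_mul, sub_mul, smul_mul_assoc, one_mul]
  module

theorem commute_f1_mul_fm1_sub_f0_f0 : Commute (f1 p q * fm1 p q - f0 p q) (f0 p q) := by
  refine Commute.sub_left ?_ (Commute.refl _)
  rw [Commute, SemiconjBy, mul_assoc, fm1_mul_f0, ← mul_assoc, f0_mul_f1]
  simp only [mul_add, add_mul, mul_smul_comm, smul_mul_assoc, mul_assoc]

theorem adjoin_generators : Algebra.adjoin ℂ {f1 p q, fm1 p q, f0 p q} = ⊤ := by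
  have hgen : {f1 p q, fm1 p q, f0 p q} =
      RingQuot.mkAlgHom ℂ (sphereRel p q) '' Set.range (FreeAlgebra.ι ℂ) := by
    ext x
    simp [f1, fm1, f0, F1, Fm1, F0, Fin.exists_fin_succ, eq_comm]
  rw [hgen, Algebra.adjoin_image, FreeAlgebra.adjoin_range_ι, Algebra.map_top,
    AlgHom.range_eq_top]
  exact RingQuot.mkAlgHom_surjective ℂ _

section Representation

open ContinuousLinearMap

variable {p q} {M : Type*} [TopologicalSpace M] [AddCommGroup M] [Module ℂ M]
  [IsTopologicalAddGroup M] [ContinuousConstSMul ℂ M] (ρ : QSphere p q →ₐ[ℂ] M →L[ℂ] M)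

theorem ker_one_sub_f0_mem_invtSubmodule (hp : p ≠ 0) (a : QSphere p q) :
    LinearMap.ker (ρ (1 - f0 p q) : M →ₗ[ℂ] M) ∈ Module.End.invtSubmodule (ρ a) := by
  refine mem_invtSubmodule_of_adjoin_eq_top ρ (adjoin_generators p q) ?_ a
  rintro g (rfl | rfl | rfl)
  · exact ker_mem_invtSubmodule_of_mul_eq_smul_mul ρ (one_sub_f0_mul_f1 p q)
  · exact ker_mem_invtSubmodule_of_smul_mul_eq_mul ρ (by exact_mod_cast hp)
      (smul_one_sub_f0_mul_fm1 p q)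
  · exact ker_mem_invtSubmodule_of_commute ρ ((Commute.one_left _).sub_left (Commute.refl _))

theorem ker_f1_mul_fm1_sub_f0_mem_invtSubmodule (hq : q ≠ 0) (a : QSphere p q) :
    LinearMap.ker (ρ (f1 p q * fm1 p q - f0 p q) : M →ₗ[ℂ] M) ∈
      Module.End.invtSubmodule (ρ a) := by
  refine mem_invtSubmodule_of_adjoin_eq_top ρ (adjoin_generators p q) ?_ a
  rintro g (rfl | rfl | rfl)
  · exact ker_mem_invtSubmodule_of_mul_eq_smul_mul ρ (f1_mul_fm1_sub_f0_mul_f1 p q)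
  · exact ker_mem_invtSubmodule_of_smul_mul_eq_mul ρ (by exact_mod_cast hq)
      (smul_f1_mul_fm1_sub_f0_mul_fm1 p q)
  · exact ker_mem_invtSubmodule_of_commute ρ (commute_f1_mul_fm1_sub_f0_f0 p q)

end Representation

section HilbertRepresentation

variable {p q} {H : Type*} [NormedAddCommGroup H] [InnerProductSpace ℂ H] [CompleteSpace H]
  (ρ : QSphere p q →ₐ[ℂ] H →L[ℂ] H)

theorem isSelfAdjoint_f1_mul_fm1_sub_f0
    (h0 : ContinuousLinearMap.adjoint (ρ (f0 p q)) = ρ (f0 p q))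
    (h1 : ContinuousLinearMap.adjoint (ρ (f1 p q)) = ρ (fm1 p q)) :
    IsSelfAdjoint (ρ (f1 p q * fm1 p q - f0 p q)) := by
  rw [map_sub, map_mul, ← h1, ← ContinuousLinearMap.star_eq_adjoint]
  exact (IsSelfAdjoint.mul_star_self _).sub (ContinuousLinearMap.isSelfAdjoint_iff'.mpr h0)

theorem orthogonal_ker_one_sub_f0_le_ker_f1_mul_fm1_sub_f0
    (h : IsSelfAdjoint (ρ (f1 p q * fm1 p q - f0 p q))) :
    (LinearMap.ker (ρ (1 - f0 p q) : H →ₗ[ℂ] H))ᗮ ≤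
      LinearMap.ker (ρ (f1 p q * fm1 p q - f0 p q) : H →ₗ[ℂ] H) := by
  refine h.orthogonal_le_ker_of_range_le ?_
  rintro _ ⟨ψ, rfl⟩
  simpa using congr(ρ $(one_sub_f0_mul_f1_mul_fm1_sub_f0 p q) ψ)

end HilbertRepresentation

end QSphere

theorem sphere_representation_decomposition_general (p q : ℝ) (hp0 : 0 < p)
    (hq0 : 0 < q)
    {H : Type*} [NormedAddCommGroup H] [InnerProductSpace ℂ H] [CompleteSpace H]
    (ρ : QSphere p q →ₐ[ℂ] (H →L[ℂ] H))
    (hstar0 : ContinuousLinearMap.adjoint (ρ (f0 p q)) = ρ (f0 p q))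
    (hstar1 : ContinuousLinearMap.adjoint (ρ (f1 p q)) = ρ (fm1 p q)) :
    (IsClosed ((LinearMap.ker ((1 - ρ (f0 p q) : H →L[ℂ] H) : H →ₗ[ℂ] H)) : Set H)) ∧
    (IsClosed ((LinearMap.ker (ρ (f1 p q * fm1 p q - f0 p q) : H →ₗ[ℂ] H)) : Set H)) ∧
    (∀ a : QSphere p q, ∀ ψ ∈ LinearMap.ker ((1 - ρ (f0 p q) : H →L[ℂ] H) : H →ₗ[ℂ] H),
      ρ a ψ ∈ LinearMap.ker ((1 - ρ (f0 p q) : H →L[ℂ] H) : H →ₗ[ℂ] H)) ∧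
    (∀ a : QSphere p q, ∀ ψ ∈ LinearMap.ker (ρ (f1 p q * fm1 p q - f0 p q) : H →ₗ[ℂ] H),
      ρ a ψ ∈ LinearMap.ker (ρ (f1 p q * fm1 p q - f0 p q) : H →ₗ[ℂ] H)) ∧
    ((LinearMap.ker ((1 - ρ (f0 p q) : H →L[ℂ] H) : H →ₗ[ℂ] H))ᗮ ≤
      LinearMap.ker (ρ (f1 p q * fm1 p q - f0 p q) : H →ₗ[ℂ] H)) ∧
    (LinearMap.ker ((1 - ρ (f0 p q) : H →L[ℂ] H) : H →ₗ[ℂ] H) ⊔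
      (LinearMap.ker (ρ (f1 p q * fm1 p q - f0 p q) : H →ₗ[ℂ] H) ⊓
        (LinearMap.ker ((1 - ρ (f0 p q) : H →L[ℂ] H) : H →ₗ[ℂ] H))ᗮ) = ⊤) ∧
    (∀ ψ ∈ LinearMap.ker ((1 - ρ (f0 p q) : H →L[ℂ] H) : H →ₗ[ℂ] H),
      ∀ χ ∈ LinearMap.ker (ρ (f1 p q * fm1 p q - f0 p q) : H →ₗ[ℂ] H) ⊓
        (LinearMap.ker ((1 - ρ (f0 p q) : H →L[ℂ] H) : H →ₗ[ℂ] H))ᗮ,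
      ⟪ψ, χ⟫_ℂ = 0) := by
  rw [← map_one ρ, ← map_sub]
  have hle := QSphere.orthogonal_ker_one_sub_f0_le_ker_f1_mul_fm1_sub_f0 ρ
    (QSphere.isSelfAdjoint_f1_mul_fm1_sub_f0 ρ hstar0 hstar1)
  refine ⟨ContinuousLinearMap.isClosed_ker _, ContinuousLinearMap.isClosed_ker _,
    QSphere.ker_one_sub_f0_mem_invtSubmodule ρ hp0.ne',
    QSphere.ker_f1_mul_fm1_sub_f0_mem_invtSubmodule ρ hq0.ne', hle, ?_,
    fun ψ hψ χ hχ ↦ Submodule.inner_right_of_mem_orthogonal hψ hχ.2⟩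
  rw [inf_eq_right.mpr hle]
  exact Submodule.sup_orthogonal_of_hasOrthogonalProjection

/-- Let ρ : P(S²_{pqφ}) → B(H) be a unital star-algebra homomorphism into
the bounded operators on a complex Hilbert space H (the star structure of P(S²_{pqφ})
being determined by f₀* = f₀ and f₁* = f₋₁).  Then the closed subspaces
K₁ = ker(1 - ρ(f₀)) and K₂ = ker(ρ(f₁f₋₁ - f₀)) are invariant under all representation
operators, K₁ᗮ ⊆ K₂, and H is the orthogonal direct sum of K₁ and K₂ ∩ K₁ᗮ. -/
theorem sphere_representation_decomposition (p q : ℝ) (hp0 : 0 < p) (hp1 : p < 1)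
    (hq0 : 0 < q) (hq1 : q < 1)
    {H : Type*} [NormedAddCommGroup H] [InnerProductSpace ℂ H] [CompleteSpace H]
    (ρ : QSphere p q →ₐ[ℂ] (H →L[ℂ] H))
    (hstar0 : ContinuousLinearMap.adjoint (ρ (f0 p q)) = ρ (f0 p q))
    (hstar1 : ContinuousLinearMap.adjoint (ρ (f1 p q)) = ρ (fm1 p q)) :
    (IsClosed ((LinearMap.ker ((1 - ρ (f0 p q) : H →L[ℂ] H) : H →ₗ[ℂ] H)) : Set H)) ∧
    (IsClosed ((LinearMap.ker (ρ (f1 p q * fm1 p q - f0 p q) : H →ₗ[ℂ] H)) : Set H)) ∧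
    (∀ a : QSphere p q, ∀ ψ ∈ LinearMap.ker ((1 - ρ (f0 p q) : H →L[ℂ] H) : H →ₗ[ℂ] H),
      ρ a ψ ∈ LinearMap.ker ((1 - ρ (f0 p q) : H →L[ℂ] H) : H →ₗ[ℂ] H)) ∧
    (∀ a : QSphere p q, ∀ ψ ∈ LinearMap.ker (ρ (f1 p q * fm1 p q - f0 p q) : H →ₗ[ℂ] H),
      ρ a ψ ∈ LinearMap.ker (ρ (f1 p q * fm1 p q - f0 p q) : H →ₗ[ℂ] H)) ∧
    ((LinearMap.ker ((1 - ρ (f0 p q) : H →L[ℂ] H) : H →ₗ[ℂ] H))ᗮ ≤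
      LinearMap.ker (ρ (f1 p q * fm1 p q - f0 p q) : H →ₗ[ℂ] H)) ∧
    (LinearMap.ker ((1 - ρ (f0 p q) : H →L[ℂ] H) : H →ₗ[ℂ] H) ⊔
      (LinearMap.ker (ρ (f1 p q * fm1 p q - f0 p q) : H →ₗ[ℂ] H) ⊓
        (LinearMap.ker ((1 - ρ (f0 p q) : H →L[ℂ] H) : H →ₗ[ℂ] H))ᗮ) = ⊤) ∧
    (∀ ψ ∈ LinearMap.ker ((1 - ρ (f0 p q) : H →L[ℂ] H) : H →ₗ[ℂ] H),
      ∀ χ ∈ LinearMap.ker (ρ (f1 p q * fm1 p q - f0 p q) : H →ₗ[ℂ] H) ⊓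
        (LinearMap.ker ((1 - ρ (f0 p q) : H →L[ℂ] H) : H →ₗ[ℂ] H))ᗮ,
      ⟪ψ, χ⟫_ℂ = 0) :=
  sphere_representation_decomposition_general p q hp0 hq0 ρ hstar0 hstar1
end
end
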